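/- There exist constants δ ∈ (0,1] and c₀ > 0 such that: for every smooth map η : ℝ² → ℝ², 2-periodic in each variable, satisfying the odevity conditions (η₁ even in y₂, η₂ odd in y₂), det(I + ∇η) = 1, and ‖∂₂η‖₂ ≤ δ, and for all smooth 2-periodic functions g, h : ℝ² → ℝ and every multi-index α = (α₁,α₂) with 1 ≤ |α| ≤ 2, one has ∫_{(-1,1)²} |∂^α η| |g| |h| dy ≤ c₀ ‖∂₂η‖_{|α|} ‖g‖₁ ‖h‖₀ if α₂ = 0, and ∫_{(-1,1)²} |∂^α η| |g| |h| dy ≤ c₀ ‖∂₂∂^α η‖₀ ‖g‖₁ ‖h‖₀ if α₂ ≠ 0. -/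

import Mathlib

/-!
Every estimate comes from a pointwise bound `|∂^α η (y)| ≤ ∫₋₁¹ w (y₁, t) dt` by a weight `w`
controlled in `L²`: Fubini, Cauchy–Schwarz on vertical lines, the trace bound
`∫₋₁¹ g (x, t)² dt ≤ 2 ‖g‖₁²` and Cauchy–Schwarz in `x` then give
`∫ |∂^α η| |g| |h| ≤ 2 ‖w‖₀ ‖g‖₁ ‖h‖₀`.

If `α₂ ≠ 0`, `∂^α η` is the `∂₂`-derivative of a function periodic in `y₂`, so it has zero mean on
vertical lines and `w = |∂₂ ∂^α η|` works. If `α₂ = 0`, the constraint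
`(1 + ∂₁η₁)(1 + ∂₂η₂) - ∂₂η₁ ∂₁η₂ = 1` and its `∂₁`-derivative express `∂₁η₁` and `∂₁²η₁` through
`∂₂η` and `∂₁η₂`. This is solvable because smallness of `‖∂₂η‖₂` makes `∂₂η` uniformly small
(one-dimensional Sobolev bounds in each variable), and `∂₁η₂` is controlled by `∂₂η`: it is odd in
`y₂`, hence of zero vertical mean, and `∂₂∂₁η₂ = ∂₁∂₂η₂`.
-/

open MeasureTheory

noncomputable section

/-- A point of the plane `ℝ²`. -/
abbrev Pt := ℝ × ℝ

/-- The periodic cell `(-1,1)²`. -/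
def cell : Set Pt := Set.Ioo (-1 : ℝ) 1 ×ˢ Set.Ioo (-1 : ℝ) 1

/-- `f` is 2-periodic in each variable. -/
def Periodic2 (f : Pt → ℝ) : Prop :=
  (∀ y : Pt, f (y.1 + 2, y.2) = f y) ∧ ∀ y : Pt, f (y.1, y.2 + 2) = f y

/-- Partial derivative in the first variable. -/
def p1 (f : Pt → ℝ) : Pt → ℝ := fun y => fderiv ℝ f y (1, 0)

/-- Partial derivative in the second variable. -/
def p2 (f : Pt → ℝ) : Pt → ℝ := fun y => fderiv ℝ f y (0, 1)

/-- Iterated partial derivative `∂₁^a ∂₂^b f`. -/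
def pd (a b : ℕ) (f : Pt → ℝ) : Pt → ℝ := p1^[a] (p2^[b] f)

/-- Square of the `L²((-1,1)²)` norm. -/
def L2sq (f : Pt → ℝ) : ℝ := ∫ y in cell, (f y) ^ 2

/-- The `L²((-1,1)²)` norm `‖f‖₀`. -/
def L2 (f : Pt → ℝ) : ℝ := Real.sqrt (L2sq f)

/-- Square of the Sobolev norm `‖f‖_i² = Σ_{|α| ≤ i} ‖∂^α f‖₀²`. -/
def sobSq (i : ℕ) (f : Pt → ℝ) : ℝ :=
  ∑ a ∈ Finset.range (i + 1), ∑ b ∈ Finset.range (i + 1 - a), L2sq (pd a b f)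

/-- The Sobolev norm `‖f‖_i`. -/
def sob (i : ℕ) (f : Pt → ℝ) : ℝ := Real.sqrt (sobSq i f)

/-- Square of the homogeneous seminorm `‖∇^i f‖₀² = Σ_{|α| = i} ‖∂^α f‖₀²`. -/
def gradSq (i : ℕ) (f : Pt → ℝ) : ℝ :=
  ∑ a ∈ Finset.range (i + 1), L2sq (pd a (i - a) f)

/-- First component of a map `ℝ² → ℝ²`. -/
def comp1 (v : Pt → Pt) : Pt → ℝ := fun y => (v y).1

/-- Second component of a map `ℝ² → ℝ²`. -/
def comp2 (v : Pt → Pt) : Pt → ℝ := fun y => (v y).2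

/-- The odevity conditions: the first component is even in `y₂`, the second is odd. -/
def Odev (v : Pt → Pt) : Prop :=
  ∀ y : Pt, (v (y.1, -y.2)).1 = (v y).1 ∧ (v (y.1, -y.2)).2 = -(v y).2

/-- The incompressibility condition `det(I + ∇η) = 1`. -/
def DetCond (η : Pt → Pt) : Prop :=
  ∀ y : Pt, (1 + p1 (comp1 η) y) * (1 + p2 (comp2 η) y)
      - p2 (comp1 η) y * p1 (comp2 η) y = 1

/-- Sobolev norm `‖v‖_i` of a vector field (components summed). -/
def sobV (i : ℕ) (v : Pt → Pt) : ℝ := Real.sqrt (sobSq i (comp1 v) + sobSq i (comp2 v))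

/-- The vector field `∂₂v`. -/
def d2V (v : Pt → Pt) : Pt → Pt := fun y => (p2 (comp1 v) y, p2 (comp2 v) y)

open Set
open scoped ContDiff

section Partials

variable {f : Pt → ℝ}

theorem ContDiff.p1 {m n : WithTop ℕ∞} (hf : ContDiff ℝ n f) (hmn : m + 1 ≤ n) :
    ContDiff ℝ m (p1 f) :=
  (hf.fderiv_right hmn).clm_apply contDiff_const

theorem ContDiff.p2 {m n : WithTop ℕ∞} (hf : ContDiff ℝ n f) (hmn : m + 1 ≤ n) :
    ContDiff ℝ m (p2 f) :=
  (hf.fderiv_right hmn).clm_apply contDiff_const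

theorem ContDiff.pd (hf : ContDiff ℝ ∞ f) (a b : ℕ) : ContDiff ℝ ∞ (pd a b f) :=
  Function.Iterate.rec (ContDiff ℝ ∞)
    (Function.Iterate.rec (ContDiff ℝ ∞) hf (fun _ hu => hu.p2 (by simp)) b)
    (fun _ hu => hu.p1 (by simp)) a

theorem hasDerivAt_p1 {x t : ℝ} (hf : DifferentiableAt ℝ f (x, t)) :
    HasDerivAt (fun s => f (s, t)) (p1 f (x, t)) x :=
  hf.hasFDerivAt.comp_hasDerivAt x ((hasDerivAt_id x).prodMk (hasDerivAt_const x t))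

theorem hasDerivAt_p2 {x t : ℝ} (hf : DifferentiableAt ℝ f (x, t)) :
    HasDerivAt (fun s => f (x, s)) (p2 f (x, t)) t :=
  hf.hasFDerivAt.comp_hasDerivAt t ((hasDerivAt_const t x).prodMk (hasDerivAt_id t))

theorem fderiv_add_eq_of_forall_add_eq {E F : Type*} [NormedAddCommGroup E] [NormedSpace ℝ E]
    [NormedAddCommGroup F] [NormedSpace ℝ F] {f : E → F} {v : E} (h : ∀ y, f (y + v) = f y)
    (y : E) : fderiv ℝ f (y + v) = fderiv ℝ f y := by
  rw [← fderiv_comp_add_right, funext h]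

theorem Periodic2.fderiv (hf : Periodic2 f) (y : Pt) :
    fderiv ℝ f (y.1 + 2, y.2) = fderiv ℝ f y ∧ fderiv ℝ f (y.1, y.2 + 2) = fderiv ℝ f y := by
  constructor
  · have h := fderiv_add_eq_of_forall_add_eq (f := f) (v := ((2 : ℝ), (0 : ℝ)))
      (fun z => show f (z.1 + 2, z.2 + 0) = f z by simpa using hf.1 z) y
    rwa [show y + ((2 : ℝ), (0 : ℝ)) = (y.1 + 2, y.2) from Prod.ext rfl (add_zero _)] at h
  · have h := fderiv_add_eq_of_forall_add_eq (f := f) (v := ((0 : ℝ), (2 : ℝ)))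
      (fun z => show f (z.1 + 0, z.2 + 2) = f z by simpa using hf.2 z) y
    rwa [show y + ((0 : ℝ), (2 : ℝ)) = (y.1, y.2 + 2) from Prod.ext (add_zero _) rfl] at h

theorem Periodic2.p1 (hf : Periodic2 f) : Periodic2 (p1 f) :=
  ⟨fun y => by simp only [_root_.p1, (hf.fderiv y).1],
    fun y => by simp only [_root_.p1, (hf.fderiv y).2]⟩

theorem Periodic2.p2 (hf : Periodic2 f) : Periodic2 (p2 f) :=
  ⟨fun y => by simp only [_root_.p2, (hf.fderiv y).1],
    fun y => by simp only [_root_.p2, (hf.fderiv y).2]⟩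

theorem Periodic2.pd (hf : Periodic2 f) (a b : ℕ) : Periodic2 (pd a b f) :=
  Function.Iterate.rec Periodic2 (Function.Iterate.rec Periodic2 hf (fun _ hu => hu.p2) b)
    (fun _ hu => hu.p1) a

def OddSnd (f : Pt → ℝ) : Prop := ∀ y : Pt, f (y.1, -y.2) = -f y

def reflectSnd : Pt ≃L[ℝ] Pt :=
  (ContinuousLinearEquiv.refl ℝ ℝ).prodCongr (ContinuousLinearEquiv.neg ℝ)

theorem OddSnd.p1 (hf : OddSnd f) : OddSnd (p1 f) := by
  intro y
  have hcomp : f ∘ reflectSnd = -f := funext fun z => hf z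
  have h := congrArg (fun L => L ((1 : ℝ), (0 : ℝ)))
    (reflectSnd.comp_right_fderiv (f := f) (x := y))
  rw [hcomp, fderiv_neg] at h
  simpa [_root_.p1, reflectSnd] using h.symm

theorem p1_p2_comm (hf : ContDiff ℝ 2 f) : p1 (p2 f) = p2 (p1 f) := by
  funext y
  have hd : Differentiable ℝ (fderiv ℝ f) :=
    (hf.fderiv_right (m := 1) le_rfl).differentiable one_ne_zero
  have key : ∀ v w : Pt, fderiv ℝ (fun z => fderiv ℝ f z v) y w = fderiv ℝ (fderiv ℝ f) y w v :=
    fun v w => by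
      rw [fderiv_clm_apply (hd y) (differentiableAt_const v)]
      simp
  show fderiv ℝ (fun z => fderiv ℝ f z (0, 1)) y (1, 0)
    = fderiv ℝ (fun z => fderiv ℝ f z (1, 0)) y (0, 1)
  rw [key, key]
  exact (hf.contDiffAt.isSymmSndFDerivAt (by simp)) ((1 : ℝ), (0 : ℝ)) ((0 : ℝ), (1 : ℝ))

theorem pd_succ (hf : ContDiff ℝ ∞ f) (a b : ℕ) : pd a (b + 1) f = p2 (pd a b f) := by
  have comm : ∀ a (u : Pt → ℝ), ContDiff ℝ ∞ u → p1^[a] (p2 u) = p2 (p1^[a] u) := by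
    intro a
    induction a with
    | zero => exact fun _ _ => rfl
    | succ n ih =>
      intro u hu
      rw [Function.iterate_succ_apply, Function.iterate_succ_apply,
        p1_p2_comm (contDiff_infty.1 hu 2), ih _ (hu.p1 (by simp))]
  rw [pd, pd, Function.iterate_succ_apply', comm a _ (show ContDiff ℝ ∞ (p2^[b] f) from hf.pd 0 b)]

end Partials

theorem integral_abs_mul_abs_le {α : Type*} [MeasurableSpace α] {μ : Measure α} {f g : α → ℝ}
    (hf : MemLp f 2 μ) (hg : MemLp g 2 μ) :
    ∫ x, |f x| * |g x| ∂μ ≤ √(∫ x, f x ^ 2 ∂μ) * √(∫ x, g x ^ 2 ∂μ) := by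
  have h := integral_mul_le_Lp_mul_Lq_of_nonneg (μ := μ) Real.HolderConjugate.two_two
    (Filter.Eventually.of_forall fun x => abs_nonneg (f x))
    (Filter.Eventually.of_forall fun x => abs_nonneg (g x))
    (by simpa [Pi.abs_def] using hf.abs) (by simpa [Pi.abs_def] using hg.abs)
  simpa [Real.sqrt_eq_rpow] using h

section OneDim

variable {u u' v : ℝ → ℝ} {a b x : ℝ}

theorem abs_sub_le_integral_abs_deriv (hu : ∀ t, HasDerivAt u (u' t) t) (hu' : Continuous u')
    {s : ℝ} (hs : s ∈ Icc a b) (hx : x ∈ Icc a b) :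
    |u x - u s| ≤ ∫ t in a..b, |u' t| := by
  rw [← intervalIntegral.integral_eq_sub_of_hasDerivAt (fun t _ => hu t)
    (hu'.intervalIntegrable s x), intervalIntegral.integral_of_le (hs.1.trans hs.2)]
  refine (intervalIntegral.norm_integral_le_integral_norm_uIoc (f := u')).trans ?_
  refine setIntegral_mono_set hu'.norm.integrableOn_Ioc
    (Filter.Eventually.of_forall fun t => norm_nonneg _) (Filter.Eventually.of_forall ?_)
  intro t ht
  exact ⟨lt_of_le_of_lt (le_min hs.1 hx.1) ht.1, ht.2.trans (max_le hs.2 hx.2)⟩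

theorem abs_le_inv_mul_integral_abs_add (hab : a < b) (hu : ∀ t, HasDerivAt u (u' t) t)
    (hu' : Continuous u') (hx : x ∈ Icc a b) :
    |u x| ≤ (b - a)⁻¹ * (∫ t in a..b, |u t|) + ∫ t in a..b, |u' t| := by
  have hcont : Continuous u := continuous_iff_continuousAt.2 fun t => (hu t).continuousAt
  obtain ⟨s, hs, hs_avg⟩ := exists_eq_interval_average hab.ne hcont.abs.continuousOn
  rw [interval_average_eq, smul_eq_mul] at hs_avg
  have hs' : s ∈ Icc a b := by simpa [uIcc_of_le hab.le] using uIoo_subset_uIcc_self hs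
  calc |u x| ≤ |u s| + |u x - u s| := by simpa using abs_add_le (u s) (u x - u s)
    _ ≤ _ := by rw [hs_avg]; gcongr; exact abs_sub_le_integral_abs_deriv hu hu' hs' hx

theorem abs_le_integral_abs_deriv_of_integral_eq_zero (hab : a < b)
    (hu : ∀ t, HasDerivAt u (u' t) t) (hu' : Continuous u') (h0 : ∫ t in a..b, u t = 0)
    (hx : x ∈ Icc a b) : |u x| ≤ ∫ t in a..b, |u' t| := by
  have hcont : Continuous u := continuous_iff_continuousAt.2 fun t => (hu t).continuousAt
  obtain ⟨s, hs, hs_avg⟩ := exists_eq_interval_average hab.ne hcont.continuousOn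
  rw [interval_average_eq, h0, smul_zero] at hs_avg
  have hs' : s ∈ Icc a b := by simpa [uIcc_of_le hab.le] using uIoo_subset_uIcc_self hs
  simpa [hs_avg] using abs_sub_le_integral_abs_deriv hu hu' hs' hx

theorem intervalIntegral_abs_mul_abs_le (hab : a ≤ b)
    (hu : Continuous u) (hv : Continuous v) :
    ∫ t in a..b, |u t| * |v t| ≤ √(∫ t in a..b, u t ^ 2) * √(∫ t in a..b, v t ^ 2) := by
  have hL2 : ∀ {f : ℝ → ℝ}, Continuous f → MemLp f 2 (volume.restrict (Ioc a b)) := fun hf =>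
    (memLp_two_iff_integrable_sq hf.aestronglyMeasurable).2 (hf.pow 2).integrableOn_Ioc
  simpa only [intervalIntegral.integral_of_le hab] using integral_abs_mul_abs_le (hL2 hu) (hL2 hv)

theorem sq_intervalIntegral_le (hab : a ≤ b) (hu : Continuous u) :
    (∫ t in a..b, |u t|) ^ 2 ≤ (b - a) * ∫ t in a..b, u t ^ 2 := by
  have h := intervalIntegral_abs_mul_abs_le hab hu (continuous_const (y := (1 : ℝ)))
  simp only [abs_one, mul_one, one_pow, intervalIntegral.integral_const, smul_eq_mul] at h
  have h0 : 0 ≤ ∫ t in a..b, |u t| := intervalIntegral.integral_nonneg hab fun _ _ => abs_nonneg _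
  have h1 : 0 ≤ ∫ t in a..b, u t ^ 2 := intervalIntegral.integral_nonneg hab fun _ _ => sq_nonneg _
  calc (∫ t in a..b, |u t|) ^ 2 ≤ (√(∫ t in a..b, u t ^ 2) * √(b - a)) ^ 2 := by gcongr
    _ = _ := by rw [mul_pow, Real.sq_sqrt h1, Real.sq_sqrt (by linarith), mul_comm]

end OneDim

section Cell

theorem integrableOn_cell {f : Pt → ℝ} (hf : Continuous f) : IntegrableOn f cell :=
  (hf.continuousOn.integrableOn_compact (isCompact_Icc.prod isCompact_Icc)).mono_set
    (prod_mono Ioo_subset_Icc_self Ioo_subset_Icc_self)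

theorem memLp_two_cell {f : Pt → ℝ} (hf : Continuous f) : MemLp f 2 (volume.restrict cell) :=
  (memLp_two_iff_integrable_sq hf.aestronglyMeasurable).2 (integrableOn_cell (hf.pow 2))

theorem integral_cell_eq_integral_integral {F : Pt → ℝ} (hF : Continuous F) :
    ∫ y in cell, F y = ∫ x in (-1 : ℝ)..1, ∫ t in (-1 : ℝ)..1, F (x, t) := by
  refine (setIntegral_prod F (integrableOn_cell hF)).trans ?_
  simp only [intervalIntegral.integral_of_le (show (-1 : ℝ) ≤ 1 by norm_num),
    integral_Ioc_eq_integral_Ioo]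

theorem integral_cell_eq_integral_integral_swap {F : Pt → ℝ} (hF : Continuous F) :
    ∫ y in cell, F y = ∫ t in (-1 : ℝ)..1, ∫ x in (-1 : ℝ)..1, F (x, t) := by
  have hint : Integrable F ((volume.restrict (Ioo (-1 : ℝ) 1)).prod
      (volume.restrict (Ioo (-1 : ℝ) 1))) := by
    rw [Measure.prod_restrict]; exact integrableOn_cell hF
  have h := integral_prod_symm F hint
  rw [Measure.prod_restrict] at h
  refine h.trans ?_
  simp only [intervalIntegral.integral_of_le (show (-1 : ℝ) ≤ 1 by norm_num),
    integral_Ioc_eq_integral_Ioo]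

theorem continuous_integral_vertical {F : Pt → ℝ} (hF : Continuous F) :
    Continuous fun x => ∫ t in (-1 : ℝ)..1, F (x, t) :=
  intervalIntegral.continuous_parametric_intervalIntegral_of_continuous'
    (f := fun x t => F (x, t)) hF _ _

theorem continuous_integral_horizontal {F : Pt → ℝ} (hF : Continuous F) :
    Continuous fun t => ∫ x in (-1 : ℝ)..1, F (x, t) :=
  continuous_integral_vertical (F := fun z => F (z.2, z.1)) (hF.comp continuous_swap)

end Cell

section L2

theorem L2sq_nonneg (f : Pt → ℝ) : 0 ≤ L2sq f :=
  setIntegral_nonneg (measurableSet_Ioo.prod measurableSet_Ioo) fun _ _ => sq_nonneg _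

theorem sobSq_nonneg (i : ℕ) (f : Pt → ℝ) : 0 ≤ sobSq i f :=
  Finset.sum_nonneg fun _ _ => Finset.sum_nonneg fun _ _ => L2sq_nonneg _

theorem L2_nonneg (f : Pt → ℝ) : 0 ≤ L2 f := Real.sqrt_nonneg _

theorem sob_nonneg (i : ℕ) (f : Pt → ℝ) : 0 ≤ sob i f := Real.sqrt_nonneg _

theorem sobV_nonneg (i : ℕ) (v : Pt → Pt) : 0 ≤ sobV i v := Real.sqrt_nonneg _

theorem sq_L2 (f : Pt → ℝ) : L2 f ^ 2 = L2sq f := Real.sq_sqrt (L2sq_nonneg f)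

theorem L2sq_pd_le_sobSq (f : Pt → ℝ) {i a b : ℕ} (hab : a + b ≤ i) :
    L2sq (pd a b f) ≤ sobSq i f := by
  refine le_trans ?_ (Finset.single_le_sum (f := fun a' => ∑ b' ∈ Finset.range (i + 1 - a'),
    L2sq (pd a' b' f)) (fun _ _ => Finset.sum_nonneg fun _ _ => L2sq_nonneg _)
    (Finset.mem_range.2 (by omega : a < i + 1)))
  exact Finset.single_le_sum (f := fun b' => L2sq (pd a b' f)) (fun _ _ => L2sq_nonneg _)
    (Finset.mem_range.2 (by omega))

theorem L2_pd_le_sob (f : Pt → ℝ) {i a b : ℕ} (hab : a + b ≤ i) : L2 (pd a b f) ≤ sob i f :=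
  Real.sqrt_le_sqrt (L2sq_pd_le_sobSq f hab)

theorem sob_comp1_le_sobV (i : ℕ) (v : Pt → Pt) : sob i (comp1 v) ≤ sobV i v :=
  Real.sqrt_le_sqrt (le_add_of_nonneg_right (sobSq_nonneg _ _))

theorem sob_comp2_le_sobV (i : ℕ) (v : Pt → Pt) : sob i (comp2 v) ≤ sobV i v :=
  Real.sqrt_le_sqrt (le_add_of_nonneg_left (sobSq_nonneg _ _))

theorem sobSq_one (f : Pt → ℝ) : sobSq 1 f = L2sq f + L2sq (p2 f) + L2sq (p1 f) := by
  simp [sobSq, Finset.sum_range_succ, pd]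

theorem integral_cell_abs_mul_abs_le {u v : Pt → ℝ} (hu : Continuous u) (hv : Continuous v) :
    ∫ y in cell, |u y| * |v y| ≤ L2 u * L2 v :=
  integral_abs_mul_abs_le (memLp_two_cell hu) (memLp_two_cell hv)

theorem integral_cell_abs_le {u : Pt → ℝ} (hu : Continuous u) : ∫ y in cell, |u y| ≤ 2 * L2 u := by
  have h := integral_cell_abs_mul_abs_le hu (continuous_const (y := (1 : ℝ)))
  have hvol : volume.real cell = 4 := by
    rw [cell, Measure.volume_eq_prod, measureReal_def, Measure.prod_prod, Real.volume_Ioo]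
    norm_num
  have h1 : L2 (fun _ : Pt => (1 : ℝ)) = 2 := by
    rw [L2, L2sq, setIntegral_const, hvol]
    norm_num [show (4 : ℝ) = 2 ^ 2 by norm_num]
  simp only [abs_one, mul_one, h1] at h
  linarith

theorem L2_add_le {u v : Pt → ℝ} (hu : Continuous u) (hv : Continuous v) :
    L2 (fun y => u y + v y) ≤ L2 u + L2 v := by
  have hint : ∀ {f : Pt → ℝ}, Continuous f → IntegrableOn f cell := integrableOn_cell
  have hexp : L2sq (fun y => u y + v y) = L2sq u + 2 * (∫ y in cell, u y * v y) + L2sq v := by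
    simp only [L2sq, add_sq, mul_assoc]
    rw [integral_add (hint (f := fun y => u y ^ 2 + 2 * (u y * v y)) (by fun_prop))
      (hint (f := fun y => v y ^ 2) (by fun_prop)),
      integral_add (hint (f := fun y => u y ^ 2) (by fun_prop))
        (hint (f := fun y => 2 * (u y * v y)) (by fun_prop)), integral_const_mul]
  have hcs : ∫ y in cell, u y * v y ≤ L2 u * L2 v :=
    (setIntegral_mono_on (hint (f := fun y => u y * v y) (by fun_prop))
      (hint (f := fun y => |u y| * |v y|) (by fun_prop))
      (measurableSet_Ioo.prod measurableSet_Ioo) fun y _ => by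
        rw [← abs_mul]; exact le_abs_self _).trans (integral_cell_abs_mul_abs_le hu hv)
  calc L2 (fun y => u y + v y) ≤ √((L2 u + L2 v) ^ 2) :=
        Real.sqrt_le_sqrt (by nlinarith [sq_L2 u, sq_L2 v])
    _ = L2 u + L2 v := Real.sqrt_sq (add_nonneg (L2_nonneg u) (L2_nonneg v))

theorem L2_const_mul_abs {c : ℝ} (hc : 0 ≤ c) (u : Pt → ℝ) :
    L2 (fun y => c * |u y|) = c * L2 u := by
  simp only [L2, L2sq, mul_pow, sq_abs, integral_const_mul]
  rw [Real.sqrt_mul (sq_nonneg c), Real.sqrt_sq hc]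

theorem L2_abs (u : Pt → ℝ) : L2 (fun y => |u y|) = L2 u := by
  simpa using L2_const_mul_abs zero_le_one u

theorem L2_pd_comp1_le_sobV (v : Pt → Pt) {i a b : ℕ} (hab : a + b ≤ i) :
    L2 (pd a b (comp1 v)) ≤ sobV i v :=
  (L2_pd_le_sob _ hab).trans (sob_comp1_le_sobV i v)

theorem L2_pd_comp2_le_sobV (v : Pt → Pt) {i a b : ℕ} (hab : a + b ≤ i) :
    L2 (pd a b (comp2 v)) ≤ sobV i v :=
  (L2_pd_le_sob _ hab).trans (sob_comp2_le_sobV i v)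

end L2

section Slices

variable {u : Pt → ℝ}

theorem integral_vertical_abs_le (hu : ContDiff ℝ 1 u) {x : ℝ} (hx : x ∈ Icc (-1 : ℝ) 1) :
    ∫ t in (-1 : ℝ)..1, |u (x, t)| ≤ 1 / 2 * (∫ y in cell, |u y|) + ∫ y in cell, |p1 u y| := by
  have hc : Continuous u := hu.continuous
  have hc1 : Continuous (p1 u) := (hu.p1 (zero_add 1).le).continuous
  have hline : ∀ t, |u (x, t)| ≤ 1 / 2 * (∫ s in (-1 : ℝ)..1, |u (s, t)|)
      + ∫ s in (-1 : ℝ)..1, |p1 u (s, t)| := fun t => by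
    have h := abs_le_inv_mul_integral_abs_add (by norm_num)
      (fun s => hasDerivAt_p1 (hu.differentiable one_ne_zero (s, t)))
      (hc1.comp (Continuous.prodMk_left t)) hx
    norm_num at h ⊢
    exact h
  rw [integral_cell_eq_integral_integral_swap hc.abs,
    integral_cell_eq_integral_integral_swap hc1.abs, ← intervalIntegral.integral_const_mul,
    ← intervalIntegral.integral_add]
  · refine intervalIntegral.integral_mono_on (by norm_num) ?_ ?_ fun t _ => hline t
    · exact (hc.abs.comp (Continuous.prodMk_right x)).intervalIntegrable _ _
    · exact ((continuous_integral_horizontal hc.abs).const_mul _ |>.add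
        (continuous_integral_horizontal hc1.abs)).intervalIntegrable _ _
  · exact ((continuous_integral_horizontal hc.abs).const_mul _).intervalIntegrable _ _
  · exact (continuous_integral_horizontal hc1.abs).intervalIntegrable _ _

theorem integral_vertical_abs_le_L2 (hu : ContDiff ℝ 1 u) {x : ℝ} (hx : x ∈ Icc (-1 : ℝ) 1) :
    ∫ t in (-1 : ℝ)..1, |u (x, t)| ≤ L2 u + 2 * L2 (p1 u) := by
  have h1 := integral_cell_abs_le hu.continuous
  have h2 := integral_cell_abs_le (hu.p1 (zero_add 1).le).continuous
  linarith [integral_vertical_abs_le hu hx]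

theorem abs_le_sob_two (hu : ContDiff ℝ 2 u) {y : Pt} (hy : y ∈ cell) :
    |u y| ≤ 9 / 2 * sob 2 u := by
  have hu1 : ContDiff ℝ 1 u := hu.of_le one_le_two
  have hp2 : ContDiff ℝ 1 (p2 u) := hu.p2 le_rfl
  have hline := abs_le_inv_mul_integral_abs_add (by norm_num)
    (fun t => hasDerivAt_p2 (hu1.differentiable one_ne_zero (y.1, t)))
    (hp2.continuous.comp (Continuous.prodMk_right y.1)) (Ioo_subset_Icc_self hy.2)
  have h1 := integral_vertical_abs_le_L2 hu1 (Ioo_subset_Icc_self hy.1)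
  have h2 := integral_vertical_abs_le_L2 hp2 (Ioo_subset_Icc_self hy.1)
  have n00 := L2_pd_le_sob u (show 0 + 0 ≤ 2 by norm_num)
  have n10 := L2_pd_le_sob u (show 1 + 0 ≤ 2 by norm_num)
  have n01 := L2_pd_le_sob u (show 0 + 1 ≤ 2 by norm_num)
  have n11 := L2_pd_le_sob u (show 1 + 1 ≤ 2 by norm_num)
  simp only [pd, Function.iterate_zero, Function.iterate_one, id] at n00 n10 n01 n11
  norm_num at hline
  linarith

theorem abs_le_integral_abs_p2_of_integral_eq_zero (hu : ContDiff ℝ 1 u) {y : Pt}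
    (h0 : ∫ t in (-1 : ℝ)..1, u (y.1, t) = 0) (hy : y.2 ∈ Icc (-1 : ℝ) 1) :
    |u y| ≤ ∫ t in (-1 : ℝ)..1, |p2 u (y.1, t)| :=
  abs_le_integral_abs_deriv_of_integral_eq_zero (u := fun t => u (y.1, t)) (by norm_num)
    (fun t => hasDerivAt_p2 (hu.differentiable one_ne_zero (y.1, t)))
    ((hu.p2 (zero_add 1).le).continuous.comp (Continuous.prodMk_right y.1)) h0 hy

theorem OddSnd.integral_vertical_eq_zero (hu : OddSnd u) (x : ℝ) :
    ∫ t in (-1 : ℝ)..1, u (x, t) = 0 := by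
  have h := intervalIntegral.integral_comp_neg (a := (-1 : ℝ)) (b := 1) (fun t => u (x, t))
  simp only [neg_neg] at h
  simp only [show ∀ t, u (x, -t) = -u (x, t) from fun t => hu (x, t),
    intervalIntegral.integral_neg] at h
  linarith

theorem integral_vertical_p2_eq_zero (hu : ContDiff ℝ 1 u) (hper : ∀ y : Pt, u (y.1, y.2 + 2) = u y)
    (x : ℝ) : ∫ t in (-1 : ℝ)..1, p2 u (x, t) = 0 := by
  rw [intervalIntegral.integral_eq_sub_of_hasDerivAt
    (fun t _ => hasDerivAt_p2 (hu.differentiable one_ne_zero (x, t)))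
    (((hu.p2 (zero_add 1).le).continuous.comp (Continuous.prodMk_right x)).intervalIntegrable _ _)]
  have h := hper (x, -1)
  norm_num at h
  rw [h, sub_self]

theorem p1_sq (hu : Differentiable ℝ u) (y : Pt) :
    p1 (fun z => u z ^ 2) y = 2 * u y * p1 u y := by
  simp [p1, fderiv_fun_pow 2 (hu y)]

theorem integral_vertical_sq_le (hu : ContDiff ℝ 1 u) {x : ℝ} (hx : x ∈ Icc (-1 : ℝ) 1) :
    ∫ t in (-1 : ℝ)..1, u (x, t) ^ 2 ≤ 2 * sobSq 1 u := by
  have h := integral_vertical_abs_le (hu.pow 2) hx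
  have hcs := integral_cell_abs_mul_abs_le hu.continuous (hu.p1 (zero_add 1).le).continuous
  simp only [abs_pow, sq_abs, p1_sq (hu.differentiable one_ne_zero), abs_mul, abs_two,
    mul_assoc, integral_const_mul] at h
  rw [← L2sq] at h
  rw [sobSq_one]
  nlinarith [sq_L2 u, sq_L2 (p1 u), L2sq_nonneg (p2 u), sq_nonneg (L2 u - L2 (p1 u))]

theorem OddSnd.abs_le_integral_abs_p2 (hodd : OddSnd u) (hu : ContDiff ℝ 1 u)
    {y : Pt} (hy : y ∈ cell) : |u y| ≤ ∫ t in (-1 : ℝ)..1, |p2 u (y.1, t)| :=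
  abs_le_integral_abs_p2_of_integral_eq_zero hu (hodd.integral_vertical_eq_zero y.1)
    (Ioo_subset_Icc_self hy.2)

theorem abs_pd_succ_le {f : Pt → ℝ} (hf : ContDiff ℝ ∞ f) (hp : Periodic2 f) (a b : ℕ) {y : Pt}
    (hy : y ∈ cell) : |pd a (b + 1) f y| ≤ ∫ t in (-1 : ℝ)..1, |pd a (b + 1 + 1) f (y.1, t)| := by
  have hf' : ContDiff ℝ ∞ (pd a b f) := hf.pd a b
  rw [pd_succ hf a (b + 1), pd_succ hf a b]
  exact abs_le_integral_abs_p2_of_integral_eq_zero (contDiff_infty.1 (hf'.p2 (by simp)) 1)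
    (integral_vertical_p2_eq_zero (contDiff_infty.1 hf' 1) (hp.pd a b).2 y.1)
    (Ioo_subset_Icc_self hy.2)

end Slices

section ProductEstimate

theorem integral_integral_vertical_mul_le {w h : Pt → ℝ} (hw : Continuous w) (hh : Continuous h)
    (hw0 : ∀ y, 0 ≤ w y) :
    ∫ x in (-1 : ℝ)..1, (∫ t in (-1 : ℝ)..1, w (x, t)) * √(∫ t in (-1 : ℝ)..1, h (x, t) ^ 2)
      ≤ √2 * L2 w * L2 h := by
  set M := fun x => ∫ t in (-1 : ℝ)..1, w (x, t)
  set H := fun x => √(∫ t in (-1 : ℝ)..1, h (x, t) ^ 2)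
  have hM : Continuous M := continuous_integral_vertical hw
  have hH : Continuous H := (continuous_integral_vertical (hh.pow 2)).sqrt
  have hM0 : ∀ x, 0 ≤ M x := fun x =>
    intervalIntegral.integral_nonneg (by norm_num) fun _ _ => hw0 _
  have hM2 : ∫ x in (-1 : ℝ)..1, M x ^ 2 ≤ 2 * L2sq w := by
    rw [L2sq, integral_cell_eq_integral_integral (F := fun y => w y ^ 2) (by fun_prop),
      ← intervalIntegral.integral_const_mul]
    refine intervalIntegral.integral_mono_on (by norm_num) ((hM.pow 2).intervalIntegrable _ _)
      (((continuous_integral_vertical (hw.pow 2)).const_mul _).intervalIntegrable _ _) fun x _ => ?_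
    have h := sq_intervalIntegral_le (a := -1) (b := 1) (by norm_num)
      (hw.comp (Continuous.prodMk_right x))
    simp only [Function.comp_def, abs_of_nonneg (hw0 _)] at h
    norm_num at h
    exact h
  have hH2 : ∫ x in (-1 : ℝ)..1, H x ^ 2 = L2sq h := by
    simp only [H, Real.sq_sqrt (intervalIntegral.integral_nonneg (by norm_num : (-1 : ℝ) ≤ 1)
      fun _ _ => sq_nonneg _)]
    rw [L2sq, integral_cell_eq_integral_integral (F := fun y => h y ^ 2) (by fun_prop)]
  calc ∫ x in (-1 : ℝ)..1, M x * H x = ∫ x in (-1 : ℝ)..1, |M x| * |H x| := by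
        simp only [abs_of_nonneg (hM0 _), abs_of_nonneg (Real.sqrt_nonneg _), H]
    _ ≤ √(∫ x in (-1 : ℝ)..1, M x ^ 2) * √(∫ x in (-1 : ℝ)..1, H x ^ 2) :=
        intervalIntegral_abs_mul_abs_le (by norm_num) hM hH
    _ ≤ √(2 * L2sq w) * √(L2sq h) := by rw [hH2]; gcongr
    _ = √2 * L2 w * L2 h := by rw [Real.sqrt_mul zero_le_two]; rfl

theorem integral_vertical_abs_mul_abs_le {g h : Pt → ℝ} (hg : ContDiff ℝ 1 g)
    (hh : Continuous h) {x : ℝ} (hx : x ∈ Icc (-1 : ℝ) 1) :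
    ∫ t in (-1 : ℝ)..1, |g (x, t)| * |h (x, t)|
      ≤ √(2 * sobSq 1 g) * √(∫ t in (-1 : ℝ)..1, h (x, t) ^ 2) :=
  (intervalIntegral_abs_mul_abs_le (by norm_num) (hg.continuous.comp (Continuous.prodMk_right x))
    (hh.comp (Continuous.prodMk_right x))).trans
    (mul_le_mul_of_nonneg_right (Real.sqrt_le_sqrt (integral_vertical_sq_le hg hx))
      (Real.sqrt_nonneg _))

theorem integral_cell_mul_abs_mul_abs_le {φ w g h : Pt → ℝ} (hφ : Continuous φ)
    (hw : Continuous w) (hw0 : ∀ y, 0 ≤ w y)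
    (hφw : ∀ y ∈ cell, φ y ≤ ∫ t in (-1 : ℝ)..1, w (y.1, t)) (hg : ContDiff ℝ 1 g)
    (hh : Continuous h) :
    ∫ y in cell, φ y * |g y| * |h y| ≤ 2 * L2 w * sob 1 g * L2 h := by
  set M := fun x => ∫ t in (-1 : ℝ)..1, w (x, t)
  set H := fun x => √(∫ t in (-1 : ℝ)..1, h (x, t) ^ 2)
  have hM : Continuous M := continuous_integral_vertical hw
  have hM0 : ∀ x, 0 ≤ M x := fun x =>
    intervalIntegral.integral_nonneg (by norm_num) fun _ _ => hw0 _
  calc ∫ y in cell, φ y * |g y| * |h y| ≤ ∫ y in cell, M y.1 * (|g y| * |h y|) :=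
        setIntegral_mono_on (integrableOn_cell (by fun_prop)) (integrableOn_cell (by fun_prop))
          (measurableSet_Ioo.prod measurableSet_Ioo) fun y hy => by
            rw [mul_assoc]; gcongr; exact hφw y hy
    _ = ∫ x in (-1 : ℝ)..1, M x * ∫ t in (-1 : ℝ)..1, |g (x, t)| * |h (x, t)| := by
        rw [integral_cell_eq_integral_integral (by fun_prop)]
        simp only [intervalIntegral.integral_const_mul]
    _ ≤ ∫ x in (-1 : ℝ)..1, √(2 * sobSq 1 g) * (M x * H x) := by
        refine intervalIntegral.integral_mono_on (by norm_num) ?_ ?_ fun x hx => ?_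
        · exact (hM.mul (continuous_integral_vertical (F := fun z => |g z| * |h z|)
            (by fun_prop))).intervalIntegrable _ _
        · exact (continuous_const.mul (hM.mul (continuous_integral_vertical (hh.pow 2)).sqrt)
            ).intervalIntegrable _ _
        · calc M x * ∫ t in (-1 : ℝ)..1, |g (x, t)| * |h (x, t)|
              ≤ M x * (√(2 * sobSq 1 g) * H x) :=
                mul_le_mul_of_nonneg_left (integral_vertical_abs_mul_abs_le hg hh hx) (hM0 x)
            _ = _ := by ring
    _ ≤ √(2 * sobSq 1 g) * (√2 * L2 w * L2 h) := by
        rw [intervalIntegral.integral_const_mul]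
        exact mul_le_mul_of_nonneg_left (integral_integral_vertical_mul_le hw hh hw0)
          (Real.sqrt_nonneg _)
    _ = 2 * L2 w * sob 1 g * L2 h := by
        rw [Real.sqrt_mul zero_le_two, sob]
        ring_nf
        rw [Real.sq_sqrt zero_le_two]
        ring

end ProductEstimate

theorem sqrt_sq_add_sq_le (x y : ℝ) : √(x ^ 2 + y ^ 2) ≤ |x| + |y| :=
  Real.sqrt_le_iff.2 ⟨by positivity, by nlinarith [sq_abs x, sq_abs y, abs_nonneg x, abs_nonneg y]⟩

theorem sqrt_add_sqrt_le {a b : ℝ} (ha : 0 ≤ a) (hb : 0 ≤ b) : √a + √b ≤ √2 * √(a + b) := by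
  rw [← Real.sqrt_mul zero_le_two]
  refine Real.le_sqrt_of_sq_le ?_
  simpa [Real.sq_sqrt ha, Real.sq_sqrt hb] using add_sq_le (a := √a) (b := √b)

theorem integral_sqrt_pd_succ_mul_le {f₁ f₂ g h : Pt → ℝ} (hf₁ : ContDiff ℝ ∞ f₁)
    (hf₂ : ContDiff ℝ ∞ f₂) (hp₁ : Periodic2 f₁) (hp₂ : Periodic2 f₂) (hg : ContDiff ℝ 1 g)
    (hh : Continuous h) (a b : ℕ) :
    ∫ y in cell, √(pd a (b + 1) f₁ y ^ 2 + pd a (b + 1) f₂ y ^ 2) * |g y| * |h y|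
      ≤ 2 * √2 * √(L2sq (pd a (b + 1 + 1) f₁) + L2sq (pd a (b + 1 + 1) f₂)) * sob 1 g * L2 h := by
  set X₁ := pd a (b + 1 + 1) f₁
  set X₂ := pd a (b + 1 + 1) f₂
  have hX₁ : Continuous X₁ := (hf₁.pd _ _).continuous
  have hX₂ : Continuous X₂ := (hf₂.pd _ _).continuous
  have hφ₁ : Continuous (pd a (b + 1) f₁) := (hf₁.pd _ _).continuous
  have hφ₂ : Continuous (pd a (b + 1) f₂) := (hf₂.pd _ _).continuous
  have hbound : ∀ y ∈ cell, √(pd a (b + 1) f₁ y ^ 2 + pd a (b + 1) f₂ y ^ 2)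
      ≤ ∫ t in (-1 : ℝ)..1, (|X₁ (y.1, t)| + |X₂ (y.1, t)|) := fun y hy => by
    rw [intervalIntegral.integral_add (Continuous.intervalIntegrable (by fun_prop) _ _)
      (Continuous.intervalIntegrable (by fun_prop) _ _)]
    exact (sqrt_sq_add_sq_le _ _).trans
      (add_le_add (abs_pd_succ_le hf₁ hp₁ a b hy) (abs_pd_succ_le hf₂ hp₂ a b hy))
  have hw : L2 (fun y => |X₁ y| + |X₂ y|) ≤ √2 * √(L2sq X₁ + L2sq X₂) := by
    refine (L2_add_le hX₁.abs hX₂.abs).trans ?_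
    rw [L2_abs, L2_abs]
    exact sqrt_add_sqrt_le (L2sq_nonneg _) (L2sq_nonneg _)
  calc _ ≤ 2 * L2 (fun y => |X₁ y| + |X₂ y|) * sob 1 g * L2 h :=
        integral_cell_mul_abs_mul_abs_le (by fun_prop) (by fun_prop) (fun _ => by positivity)
          hbound hg hh
    _ ≤ _ := by
        have := sob_nonneg 1 g
        have := L2_nonneg h
        rw [mul_assoc 2 √2]
        gcongr

theorem abs_le_of_det_eq_one {a b c d : ℝ} (h : (1 + a) * (1 + d) - b * c = 1)
    (hb : |b| ≤ 1 / 2) (hd : |d| ≤ 1 / 2) : |a| ≤ 2 * |d| + |c| := by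
  have hd' : 1 / 2 ≤ 1 + d := by linarith [neg_abs_le d]
  have key : |a| * (1 + d) ≤ |d| + |b| * |c| := by
    rw [← abs_of_pos (by linarith : 0 < 1 + d), ← abs_mul, ← abs_mul,
      show a * (1 + d) = -d + b * c by linear_combination h]
    exact (abs_add_le _ _).trans_eq (by rw [abs_neg])
  nlinarith [abs_nonneg a, abs_nonneg c, mul_le_mul_of_nonneg_right hb (abs_nonneg c)]

theorem abs_le_of_det_deriv_eq_zero {a b c d a' b' c' d' : ℝ}
    (h : a' * (1 + d) + (1 + a) * d' - (b' * c + b * c') = 0)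
    (ha : |a| ≤ 1) (hb : |b| ≤ 1) (hc : |c| ≤ 1) (hd : |d| ≤ 1 / 2) :
    |a'| ≤ 4 * |d'| + 2 * |b'| + 2 * |c'| := by
  have hd' : 1 / 2 ≤ 1 + d := by linarith [neg_abs_le d]
  have h1a : |1 + a| ≤ 2 := (abs_add_le _ _).trans (by rw [abs_one]; linarith)
  have key : |a'| * (1 + d) ≤ |1 + a| * |d'| + |b'| * |c| + |b| * |c'| := by
    rw [← abs_of_pos (by linarith : 0 < 1 + d), ← abs_mul, ← abs_mul, ← abs_mul, ← abs_mul,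
      show a' * (1 + d) = -((1 + a) * d') + b' * c + b * c' by linear_combination h]
    exact (abs_add_three _ _ _).trans_eq (by rw [abs_neg])
  nlinarith [abs_nonneg a', abs_nonneg b', abs_nonneg c', abs_nonneg d',
    mul_le_mul_of_nonneg_right h1a (abs_nonneg d'), mul_le_mul_of_nonneg_left hc (abs_nonneg b'),
    mul_le_mul_of_nonneg_right hb (abs_nonneg c')]

theorem p1_det_eq_zero {A B C D : Pt → ℝ} (hA : Differentiable ℝ A) (hB : Differentiable ℝ B)
    (hC : Differentiable ℝ C) (hD : Differentiable ℝ D)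
    (h : ∀ y, (1 + A y) * (1 + D y) - B y * C y = 1) (y : Pt) :
    p1 A y * (1 + D y) + (1 + A y) * p1 D y - (p1 B y * C y + B y * p1 C y) = 0 := by
  have hd := (((hasDerivAt_p1 (hA (y.1, y.2))).const_add 1).fun_mul
    ((hasDerivAt_p1 (hD (y.1, y.2))).const_add 1)).fun_sub
    ((hasDerivAt_p1 (hB (y.1, y.2))).fun_mul (hasDerivAt_p1 (hC (y.1, y.2))))
  rw [show (fun s => (1 + A (s, y.2)) * (1 + D (s, y.2)) - B (s, y.2) * C (s, y.2)) = fun _ => 1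
    from funext fun s => h (s, y.2)] at hd
  simpa using hd.unique (hasDerivAt_const y.1 1)

section Incompressible

variable {η : Pt → Pt} {y : Pt}

theorem Odev.oddSnd_comp2 (hodd : Odev η) : OddSnd (comp2 η) := fun y => (hodd y).2

theorem abs_p1_comp2_le (hη : ContDiff ℝ ∞ η) (hodd : Odev η) (hy : y ∈ cell) :
    |p1 (comp2 η) y| ≤ 3 * sobV 2 (d2V η) := by
  have hη₂ : ContDiff ℝ 3 (comp2 η) := contDiff_snd.comp (contDiff_infty.1 hη 3)
  have hC : ContDiff ℝ 2 (p1 (comp2 η)) := hη₂.p1 le_rfl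
  have h := (hodd.oddSnd_comp2.p1.abs_le_integral_abs_p2 (hC.of_le one_le_two) hy).trans
    (integral_vertical_abs_le_L2 (hC.p2 le_rfl) (Ioo_subset_Icc_self hy.1))
  rw [← p1_p2_comm (hη₂.of_le (by norm_num))] at h
  have h10 : L2 (p1 (p2 (comp2 η))) ≤ sobV 2 (d2V η) :=
    L2_pd_comp2_le_sobV (d2V η) (a := 1) (b := 0) (by norm_num)
  have h20 : L2 (p1 (p1 (p2 (comp2 η)))) ≤ sobV 2 (d2V η) :=
    L2_pd_comp2_le_sobV (d2V η) (a := 2) (b := 0) (by norm_num)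
  linarith

theorem abs_grad_le_of_small (hη : ContDiff ℝ ∞ η) (hodd : Odev η) (hdet : DetCond η)
    (hsmall : sobV 2 (d2V η) ≤ 1 / 12) (hy : y ∈ cell) :
    |p1 (comp1 η) y| ≤ 1 ∧ |p2 (comp1 η) y| ≤ 1 / 2 ∧ |p1 (comp2 η) y| ≤ 1 ∧
      |p2 (comp2 η) y| ≤ 1 / 2 := by
  have h3 : ContDiff ℝ 3 η := contDiff_infty.1 hη 3
  have hB : |p2 (comp1 η) y| ≤ 9 / 2 * sob 2 (comp1 (d2V η)) :=
    abs_le_sob_two ((contDiff_fst.comp h3).p2 le_rfl) hy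
  have hD : |p2 (comp2 η) y| ≤ 9 / 2 * sob 2 (comp2 (d2V η)) :=
    abs_le_sob_two ((contDiff_snd.comp h3).p2 le_rfl) hy
  have hC := abs_p1_comp2_le hη hodd hy
  have hB' : |p2 (comp1 η) y| ≤ 1 / 2 := by linarith [sob_comp1_le_sobV 2 (d2V η)]
  have hD' : |p2 (comp2 η) y| ≤ 1 / 2 := by linarith [sob_comp2_le_sobV 2 (d2V η)]
  have hA := abs_le_of_det_eq_one (hdet y) hB' hD'
  refine ⟨?_, hB', by linarith, hD'⟩
  linarith [sob_comp2_le_sobV 2 (d2V η)]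

theorem sqrt_p1_sq_add_sq_le (hη : ContDiff ℝ ∞ η) (hp₂ : Periodic2 (comp2 η))
    (hodd : Odev η) (hdet : DetCond η) (hsmall : sobV 2 (d2V η) ≤ 1 / 12) (hy : y ∈ cell) :
    √(p1 (comp1 η) y ^ 2 + p1 (comp2 η) y ^ 2)
      ≤ 2 * (∫ t in (-1 : ℝ)..1, |p2 (p2 (comp2 η)) (y.1, t)|)
        + 2 * ∫ t in (-1 : ℝ)..1, |p1 (p2 (comp2 η)) (y.1, t)| := by
  have hη₂ : ContDiff ℝ ∞ (comp2 η) := contDiff_snd.comp hη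
  obtain ⟨-, hB, -, hD⟩ := abs_grad_le_of_small hη hodd hdet hsmall hy
  have hDv : |p2 (comp2 η) y| ≤ ∫ t in (-1 : ℝ)..1, |p2 (p2 (comp2 η)) (y.1, t)| :=
    abs_pd_succ_le hη₂ hp₂ 0 0 hy
  have hCv : |p1 (comp2 η) y| ≤ ∫ t in (-1 : ℝ)..1, |p1 (p2 (comp2 η)) (y.1, t)| := by
    have h := hodd.oddSnd_comp2.p1.abs_le_integral_abs_p2
      (contDiff_infty.1 (hη₂.p1 (by simp)) 1) hy
    rwa [← p1_p2_comm (contDiff_infty.1 hη₂ 2)] at h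
  linarith [sqrt_sq_add_sq_le (p1 (comp1 η) y) (p1 (comp2 η) y),
    abs_le_of_det_eq_one (hdet y) hB hD]

theorem sqrt_p1_p1_sq_add_sq_le (hη : ContDiff ℝ ∞ η) (hp₁ : Periodic2 (comp1 η))
    (hp₂ : Periodic2 (comp2 η)) (hodd : Odev η) (hdet : DetCond η)
    (hsmall : sobV 2 (d2V η) ≤ 1 / 12) (hy : y ∈ cell) :
    √(p1 (p1 (comp1 η)) y ^ 2 + p1 (p1 (comp2 η)) y ^ 2)
      ≤ 4 * (∫ t in (-1 : ℝ)..1, |p1 (p2 (p2 (comp2 η))) (y.1, t)|)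
        + 2 * (∫ t in (-1 : ℝ)..1, |p1 (p2 (p2 (comp1 η))) (y.1, t)|)
        + 3 * ∫ t in (-1 : ℝ)..1, |p1 (p1 (p2 (comp2 η))) (y.1, t)| := by
  have hη₁ : ContDiff ℝ ∞ (comp1 η) := contDiff_fst.comp hη
  have hη₂ : ContDiff ℝ ∞ (comp2 η) := contDiff_snd.comp hη
  have h₁ : ContDiff ℝ 3 (comp1 η) := contDiff_infty.1 hη₁ 3
  have h₂ : ContDiff ℝ 3 (comp2 η) := contDiff_infty.1 hη₂ 3
  obtain ⟨hA, hB, hC, hD⟩ := abs_grad_le_of_small hη hodd hdet hsmall hy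
  have hderiv := p1_det_eq_zero ((h₁.p1 (m := 2) le_rfl).differentiable two_ne_zero)
    ((h₁.p2 (m := 2) le_rfl).differentiable two_ne_zero)
    ((h₂.p1 (m := 2) le_rfl).differentiable two_ne_zero)
    ((h₂.p2 (m := 2) le_rfl).differentiable two_ne_zero) hdet y
  have hD₁ : |p1 (p2 (comp2 η)) y| ≤ ∫ t in (-1 : ℝ)..1, |p1 (p2 (p2 (comp2 η))) (y.1, t)| :=
    abs_pd_succ_le hη₂ hp₂ 1 0 hy
  have hB₁ : |p1 (p2 (comp1 η)) y| ≤ ∫ t in (-1 : ℝ)..1, |p1 (p2 (p2 (comp1 η))) (y.1, t)| :=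
    abs_pd_succ_le hη₁ hp₁ 1 0 hy
  have hC₁ : |p1 (p1 (comp2 η)) y| ≤ ∫ t in (-1 : ℝ)..1, |p1 (p1 (p2 (comp2 η))) (y.1, t)| := by
    have h := hodd.oddSnd_comp2.p1.p1.abs_le_integral_abs_p2
      (contDiff_infty.1 (hη₂.pd 2 0) 1) hy
    rwa [show p2 (p1 (p1 (comp2 η))) = p1 (p1 (p2 (comp2 η))) from (pd_succ hη₂ 2 0).symm] at h
  linarith [sqrt_sq_add_sq_le (p1 (p1 (comp1 η)) y) (p1 (p1 (comp2 η)) y),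
    abs_le_of_det_deriv_eq_zero hderiv hA (by linarith) hC hD]

variable {g h : Pt → ℝ}

theorem integral_sqrt_pd_one_zero_mul_le (hη : ContDiff ℝ ∞ η) (hp₂ : Periodic2 (comp2 η))
    (hodd : Odev η) (hdet : DetCond η) (hsmall : sobV 2 (d2V η) ≤ 1 / 12)
    (hg : ContDiff ℝ 1 g) (hh : Continuous h) :
    ∫ y in cell, √(pd 1 0 (comp1 η) y ^ 2 + pd 1 0 (comp2 η) y ^ 2) * |g y| * |h y|
      ≤ 8 * sobV 1 (d2V η) * sob 1 g * L2 h := by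
  have hη₂ : ContDiff ℝ ∞ (comp2 η) := contDiff_snd.comp hη
  have hX₁ : Continuous (p2 (p2 (comp2 η))) := (hη₂.pd 0 2).continuous
  have hX₂ : Continuous (p1 (p2 (comp2 η))) := (hη₂.pd 1 1).continuous
  have hφ₁ : Continuous (p1 (comp1 η)) := ((contDiff_fst.comp hη).pd 1 0).continuous
  have hφ₂ : Continuous (p1 (comp2 η)) := (hη₂.pd 1 0).continuous
  set w := fun z => 2 * |p2 (p2 (comp2 η)) z| + 2 * |p1 (p2 (comp2 η)) z|
  have hbound : ∀ y ∈ cell, √(p1 (comp1 η) y ^ 2 + p1 (comp2 η) y ^ 2)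
      ≤ ∫ t in (-1 : ℝ)..1, w (y.1, t) := fun y hy => by
    rw [intervalIntegral.integral_add (Continuous.intervalIntegrable (by fun_prop) _ _)
      (Continuous.intervalIntegrable (by fun_prop) _ _), intervalIntegral.integral_const_mul,
      intervalIntegral.integral_const_mul]
    exact sqrt_p1_sq_add_sq_le hη hp₂ hodd hdet hsmall hy
  have hw : L2 w ≤ 4 * sobV 1 (d2V η) := by
    have h01 : L2 (p2 (p2 (comp2 η))) ≤ sobV 1 (d2V η) :=
      L2_pd_comp2_le_sobV (d2V η) (a := 0) (b := 1) le_rfl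
    have h10 : L2 (p1 (p2 (comp2 η))) ≤ sobV 1 (d2V η) :=
      L2_pd_comp2_le_sobV (d2V η) (a := 1) (b := 0) le_rfl
    have := L2_add_le (hX₁.abs.const_mul 2) (hX₂.abs.const_mul 2)
    rw [L2_const_mul_abs zero_le_two, L2_const_mul_abs zero_le_two] at this
    linarith
  have := sob_nonneg 1 g
  have := L2_nonneg h
  calc _ ≤ 2 * L2 w * sob 1 g * L2 h :=
        integral_cell_mul_abs_mul_abs_le (by fun_prop) (by fun_prop) (fun _ => by positivity)
          hbound hg hh
    _ ≤ 2 * (4 * sobV 1 (d2V η)) * sob 1 g * L2 h := by gcongr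
    _ = _ := by ring

theorem integral_sqrt_pd_two_zero_mul_le (hη : ContDiff ℝ ∞ η) (hp₁ : Periodic2 (comp1 η))
    (hp₂ : Periodic2 (comp2 η)) (hodd : Odev η) (hdet : DetCond η)
    (hsmall : sobV 2 (d2V η) ≤ 1 / 12) (hg : ContDiff ℝ 1 g) (hh : Continuous h) :
    ∫ y in cell, √(pd 2 0 (comp1 η) y ^ 2 + pd 2 0 (comp2 η) y ^ 2) * |g y| * |h y|
      ≤ 18 * sobV 2 (d2V η) * sob 1 g * L2 h := by
  have hη₁ : ContDiff ℝ ∞ (comp1 η) := contDiff_fst.comp hη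
  have hη₂ : ContDiff ℝ ∞ (comp2 η) := contDiff_snd.comp hη
  have hX₁ : Continuous (p1 (p2 (p2 (comp2 η)))) := (hη₂.pd 1 2).continuous
  have hX₂ : Continuous (p1 (p2 (p2 (comp1 η)))) := (hη₁.pd 1 2).continuous
  have hX₃ : Continuous (p1 (p1 (p2 (comp2 η)))) := (hη₂.pd 2 1).continuous
  have hφ₁ : Continuous (p1 (p1 (comp1 η))) := (hη₁.pd 2 0).continuous
  have hφ₂ : Continuous (p1 (p1 (comp2 η))) := (hη₂.pd 2 0).continuous
  set w := fun z => 4 * |p1 (p2 (p2 (comp2 η))) z| + 2 * |p1 (p2 (p2 (comp1 η))) z|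
    + 3 * |p1 (p1 (p2 (comp2 η))) z|
  have hbound : ∀ y ∈ cell, √(p1 (p1 (comp1 η)) y ^ 2 + p1 (p1 (comp2 η)) y ^ 2)
      ≤ ∫ t in (-1 : ℝ)..1, w (y.1, t) := fun y hy => by
    rw [intervalIntegral.integral_add (Continuous.intervalIntegrable (by fun_prop) _ _)
      (Continuous.intervalIntegrable (by fun_prop) _ _),
      intervalIntegral.integral_add (Continuous.intervalIntegrable (by fun_prop) _ _)
      (Continuous.intervalIntegrable (by fun_prop) _ _), intervalIntegral.integral_const_mul,
      intervalIntegral.integral_const_mul, intervalIntegral.integral_const_mul]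
    exact sqrt_p1_p1_sq_add_sq_le hη hp₁ hp₂ hodd hdet hsmall hy
  have hw : L2 w ≤ 9 * sobV 2 (d2V η) := by
    have n₁ : L2 (p1 (p2 (p2 (comp2 η)))) ≤ sobV 2 (d2V η) :=
      L2_pd_comp2_le_sobV (d2V η) (a := 1) (b := 1) le_rfl
    have n₂ : L2 (p1 (p2 (p2 (comp1 η)))) ≤ sobV 2 (d2V η) :=
      L2_pd_comp1_le_sobV (d2V η) (a := 1) (b := 1) le_rfl
    have n₃ : L2 (p1 (p1 (p2 (comp2 η)))) ≤ sobV 2 (d2V η) :=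
      L2_pd_comp2_le_sobV (d2V η) (a := 2) (b := 0) le_rfl
    have s₁ := L2_add_le (u := fun z => 4 * |p1 (p2 (p2 (comp2 η))) z|
      + 2 * |p1 (p2 (p2 (comp1 η))) z|) (v := fun z => 3 * |p1 (p1 (p2 (comp2 η))) z|)
      (by fun_prop) (by fun_prop)
    have s₂ := L2_add_le (hX₁.abs.const_mul 4) (hX₂.abs.const_mul 2)
    rw [L2_const_mul_abs (by norm_num)] at s₁
    rw [L2_const_mul_abs (by norm_num), L2_const_mul_abs (by norm_num)] at s₂
    linarith
  have := sob_nonneg 1 g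
  have := L2_nonneg h
  calc _ ≤ 2 * L2 w * sob 1 g * L2 h :=
        integral_cell_mul_abs_mul_abs_le (by fun_prop) (by fun_prop) (fun _ => by positivity)
          hbound hg hh
    _ ≤ 2 * (9 * sobV 2 (d2V η)) * sob 1 g * L2 h := by gcongr
    _ = _ := by ring

end Incompressible

/-- product estimates: there are constants `δ ∈ (0,1]`, `c₀ > 0`
such that for every smooth 2-periodic map `η` satisfying the odevity conditions,
`det(I + ∇η) = 1` and `‖∂₂η‖₂ ≤ δ`, and all smooth 2-periodic `g, h` and every
multi-index `α = (a, b)` with `1 ≤ a + b ≤ 2`: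
`∫ |∂^α η||g||h| ≤ c₀‖∂₂η‖_{|α|}‖g‖₁‖h‖₀` if `b = 0`, and
`∫ |∂^α η||g||h| ≤ c₀‖∂₂∂^α η‖₀‖g‖₁‖h‖₀` if `b ≠ 0`. -/
theorem statement15 :
    ∃ δ c₀ : ℝ, 0 < δ ∧ δ ≤ 1 ∧ 0 < c₀ ∧
      ∀ η : Pt → Pt, ContDiff ℝ (⊤ : ℕ∞) η →
        Periodic2 (comp1 η) → Periodic2 (comp2 η) → Odev η → DetCond η →
        sobV 2 (d2V η) ≤ δ →
        ∀ g h : Pt → ℝ, ContDiff ℝ (⊤ : ℕ∞) g → ContDiff ℝ (⊤ : ℕ∞) h →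
          Periodic2 g → Periodic2 h →
          ∀ a b : ℕ, 1 ≤ a + b → a + b ≤ 2 →
            (b = 0 →
              (∫ y in cell,
                  Real.sqrt ((pd a b (comp1 η) y) ^ 2 + (pd a b (comp2 η) y) ^ 2)
                    * |g y| * |h y|)
                ≤ c₀ * sobV (a + b) (d2V η) * sob 1 g * L2 h) ∧
            (b ≠ 0 →
              (∫ y in cell,
                  Real.sqrt ((pd a b (comp1 η) y) ^ 2 + (pd a b (comp2 η) y) ^ 2)
                    * |g y| * |h y|)
                ≤ c₀ * Real.sqrt (L2sq (pd a (b + 1) (comp1 η))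
                      + L2sq (pd a (b + 1) (comp2 η)))
                    * sob 1 g * L2 h) := by
  refine ⟨1 / 12, 18, by norm_num, by norm_num, by norm_num, ?_⟩
  intro η hη hp₁ hp₂ hodd hdet hsmall g h hg hh _ _ a b hab₁ hab₂
  have hg₁ : ContDiff ℝ 1 g := contDiff_infty.1 hg 1
  have weaken : ∀ {c X : ℝ}, c ≤ 18 → 0 ≤ X →
      c * X * sob 1 g * L2 h ≤ 18 * X * sob 1 g * L2 h := fun hc hX => by
    have := sob_nonneg 1 g
    have := L2_nonneg h
    gcongr
  refine ⟨fun hb => ?_, fun hb => ?_⟩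
  · subst hb
    obtain rfl | rfl : a = 1 ∨ a = 2 := by omega
    · exact (integral_sqrt_pd_one_zero_mul_le hη hp₂ hodd hdet hsmall hg₁ hh.continuous).trans
        (weaken (by norm_num) (sobV_nonneg _ _))
    · exact integral_sqrt_pd_two_zero_mul_le hη hp₁ hp₂ hodd hdet hsmall hg₁ hh.continuous
  · obtain ⟨b, rfl⟩ := Nat.exists_eq_add_one_of_ne_zero hb
    have hsqrt2 : √2 ≤ 2 := Real.sqrt_le_iff.2 ⟨by norm_num, by norm_num⟩
    exact (integral_sqrt_pd_succ_mul_le (contDiff_fst.comp hη) (contDiff_snd.comp hη) hp₁ hp₂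
      hg₁ hh.continuous a b).trans (weaken (by linarith) (Real.sqrt_nonneg _))
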